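/- Let τ : W⁰ → J₋(Δ(1)) be the map w ↦ N(w) ∩ Δ(1). Then τ is surjective, and for each lower ideal I of Δ(1), the fiber τ⁻¹(I) is an interval in the weak Bruhat order on W⁰: τ⁻¹(I) = {w ∈ W⁰ : w_{I,min} ≤ w ≤ w_{I,max}}, where w ≤ w' means N(w) ⊆ N(w'). -/

import Mathlib

/-!
Inversion sets of Weyl group elements are exactly the biconvex subsets of `Δ⁺`: they are
biconvex, and conversely a nonempty biconvex `M` contains a simple root `α`, and
`s_α (M \ {α})` is a smaller biconvex set, so induction applies. For a lower ideal `I` of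
`Δ(1)`, `⟨I⟩` (the roots that are sums of elements of `I`) is biconvex, lies in `Δ(≥ 1)` and
meets `Δ(1)` in `I`; it is therefore `N(w)` for some `w ∈ W⁰`. Closedness of `Δ⁺ \ ⟨I⟩` is
where the lower-ideal property enters: if a sum of elements of `I` splits as `γ₁ + γ₂` with
`γᵢ ∈ Δ⁺`, pick a summand `x` with `⟪γ₁, x⟫ > 0`. Either `γ₁ - x ∈ Δ⁺` and one inducts on the
number of summands, or `x - γ₁ ∈ Δ⁺`; as the levels of `γ₁` and `x - γ₁` add up to `1`, one
of them lies in `Δ(0)⁺`, and subtracting it from `x` stays in `I`.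

For the fibres, if `N(w) ∩ Δ(1) = I` then the closed set `N(w)` contains `I`, hence `⟨I⟩`, and
the closed set `Δ⁺ \ N(w)` contains `Δ(1) \ I`, hence `⟨Δ(1) \ I⟩`; conversely these two
inclusions determine `N(w) ∩ Δ(1)`.
-/

open RealInnerProductSpace

variable {V : Type*} [NormedAddCommGroup V] [InnerProductSpace ℝ V] [FiniteDimensional ℝ V]

/-- The orthogonal reflection in the hyperplane orthogonal to `α`. -/
noncomputable def sref (α : V) : V ≃ₗ[ℝ] V :=
  (Submodule.reflection ((ℝ ∙ α)ᗮ)).toLinearEquiv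

/-- `Δ` is an (irreducible, crystallographic, reduced) root system, equipped with a
`ℤ`-grading `d` (so that `Δ(i) = {γ ∈ Δ | d γ = i}`) and a compatible set `Pos = Δ⁺`
of positive roots (compatibility: every root of level `≥ 1` is positive). -/
structure GradedRootSystem (Δ : Set V) (d : V → ℤ) (Pos : Set V) : Prop where
  finite : Δ.Finite
  span_top : Submodule.span ℝ Δ = ⊤
  nonzero : ∀ α ∈ Δ, α ≠ 0
  neg_mem : ∀ α ∈ Δ, -α ∈ Δ
  reduced : ∀ α ∈ Δ, ∀ c : ℝ, c • α ∈ Δ → c = 1 ∨ c = -1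
  reflect_mem : ∀ α ∈ Δ, ∀ β ∈ Δ, β - (2 * ⟪β, α⟫ / ⟪α, α⟫) • α ∈ Δ
  crystallographic : ∀ α ∈ Δ, ∀ β ∈ Δ, ∃ n : ℤ, (n : ℝ) = 2 * ⟪β, α⟫ / ⟪α, α⟫
  irreducible : ∀ Δ₁ Δ₂ : Set V, Δ = Δ₁ ∪ Δ₂ → (∀ a ∈ Δ₁, ∀ b ∈ Δ₂, ⟪a, b⟫ = 0) →
    Δ₁ = ∅ ∨ Δ₂ = ∅
  grade_add : ∀ γ₁ ∈ Δ, ∀ γ₂ ∈ Δ, γ₁ + γ₂ ∈ Δ → d (γ₁ + γ₂) = d γ₁ + d γ₂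
  grade_neg : ∀ γ ∈ Δ, d (-γ) = - d γ
  pos_subset : Pos ⊆ Δ
  pos_iff : ∀ γ ∈ Δ, (γ ∈ Pos ↔ -γ ∉ Pos)
  pos_add : ∀ γ₁ ∈ Pos, ∀ γ₂ ∈ Pos, γ₁ + γ₂ ∈ Δ → γ₁ + γ₂ ∈ Pos
  compatible : ∀ γ ∈ Δ, 1 ≤ d γ → γ ∈ Pos

/-- The level set `Δ(i)` of the grading. -/
def level (Δ : Set V) (d : V → ℤ) (i : ℤ) : Set V := {γ ∈ Δ | d γ = i}

/-- `Δ(≥ k)`. -/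
def levelGE (Δ : Set V) (d : V → ℤ) (k : ℤ) : Set V := {γ ∈ Δ | k ≤ d γ}

/-- `Δ(≤ k)`. -/
def levelLE (Δ : Set V) (d : V → ℤ) (k : ℤ) : Set V := {γ ∈ Δ | d γ ≤ k}

/-- `Δ(0)⁺`, the positive part of `Δ(0)`. -/
def pos0 (d : V → ℤ) (Pos : Set V) : Set V := {γ ∈ Pos | d γ = 0}

/-- The simple roots of a positive system `P`: positive roots that are not the sum
of two positive roots. -/
def simpleRoots (P : Set V) : Set V := {γ ∈ P | ¬ ∃ a ∈ P, ∃ b ∈ P, γ = a + b}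

/-- `idealPow Δ I k = I^k`, with `I¹ = I` and `I^{k+1} = (I + I^k) ∩ Δ`
(and `I⁰ = ∅` by convention). -/
def idealPow (Δ I : Set V) : ℕ → Set V
  | 0 => ∅
  | 1 => I
  | (k+2) => {x ∈ Δ | ∃ a ∈ I, ∃ b ∈ idealPow Δ I (k+1), x = a + b}

/-- `⟨I⟩ = ⋃_{k ≥ 1} I^k`. -/
def gen (Δ I : Set V) : Set V := ⋃ k : ℕ, idealPow Δ I (k+1)

/-- A subset `M` of roots is closed if it is closed under root addition. -/
def IsClosedSubset (Δ M : Set V) : Prop :=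
  ∀ γ₁ ∈ M, ∀ γ₂ ∈ M, γ₁ + γ₂ ∈ Δ → γ₁ + γ₂ ∈ M

/-- Bi-convexity of `M ⊆ Δ⁺`: both `M` and `Δ⁺ \ M` are closed. -/
def IsBiConvex (Δ Pos M : Set V) : Prop :=
  IsClosedSubset Δ M ∧ IsClosedSubset Δ (Pos \ M)

/-- The partial order on each level `Δ(i)`: `γ' ≼ γ` iff `γ - γ'` is a nonnegative
integral combination of the simple roots `Π(0)` of `Δ(0)⁺`. -/
def leLevel (d : V → ℤ) (Pos : Set V) (γ' γ : V) : Prop :=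
  γ - γ' ∈ AddSubmonoid.closure (simpleRoots (pos0 d Pos))

/-- A lower ideal of the weight poset `Δ(i)`. -/
def IsLowerIdeal (Δ : Set V) (d : V → ℤ) (Pos : Set V) (i : ℤ) (I : Set V) : Prop :=
  I ⊆ level Δ d i ∧ ∀ γ ∈ I, ∀ ν ∈ level Δ d i, leLevel d Pos ν γ → ν ∈ I

/-- An upper ideal of the weight poset `Δ(i)`. -/
def IsUpperIdeal (Δ : Set V) (d : V → ℤ) (Pos : Set V) (i : ℤ) (I : Set V) : Prop :=
  I ⊆ level Δ d i ∧ ∀ γ ∈ I, ∀ ν ∈ level Δ d i, leLevel d Pos γ ν → ν ∈ I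

/-- The Weyl group of the set of roots `S`: the subgroup of `GL(V)` generated by the
reflections `s_α`, `α ∈ S`. -/
noncomputable def weyl (S : Set V) : Subgroup (V ≃ₗ[ℝ] V) :=
  Subgroup.closure {g | ∃ α ∈ S, g = sref α}

/-- The inversion set `N(w) = {γ ∈ Δ⁺ | -w(γ) ∈ Δ⁺}`. -/
def invSet (Pos : Set V) (w : V ≃ₗ[ℝ] V) : Set V := {γ ∈ Pos | -(w γ) ∈ Pos}

/-- `W⁰`, the minimal length coset representatives of `W/W(0)`:
elements of `W` sending `Δ(0)⁺` into `Δ⁺`. -/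
noncomputable def W0 (Δ : Set V) (d : V → ℤ) (Pos : Set V) : Set (V ≃ₗ[ℝ] V) :=
  {w | w ∈ weyl Δ ∧ ∀ γ ∈ pos0 d Pos, w γ ∈ Pos}

section
omit [FiniteDimensional ℝ V]

variable {Δ I Pos : Set V} {d : V → ℤ}

theorem sref_apply (α x : V) :
    sref α x = x - (2 * ⟪x, α⟫ / ⟪α, α⟫) • α := by
  change (ℝ ∙ α)ᗮ.reflection x = _
  rw [Submodule.reflection_orthogonal_apply, Submodule.reflection_singleton_apply,
    real_inner_comm, real_inner_self_eq_norm_sq]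
  simp only [RCLike.ofReal_real_eq_id, id_eq]
  module

theorem sref_sref (α x : V) : sref α (sref α x) = x :=
  Submodule.reflection_reflection _ x

theorem sref_self {α : V} (hα : α ≠ 0) : sref α α = -α := by
  rw [sref_apply, mul_div_assoc, div_self (inner_self_ne_zero.2 hα), mul_one, two_smul]
  abel

theorem exists_mem_inner_pos_of_inner_multiset_sum_pos {a : V} {s : Multiset V}
    (hs : 0 < ⟪a, s.sum⟫) : ∃ x ∈ s, 0 < ⟪a, x⟫ := by
  by_contra! hle
  have hsum : ⟪a, s.sum⟫ = (s.map (⟪a, ·⟫)).sum := map_multiset_sum (innerₗ V a) s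
  have := Multiset.sum_le_card_nsmul (s.map (⟪a, ·⟫)) 0 (by simpa using hle)
  rw [smul_zero, ← hsum] at this
  linarith

theorem exists_eq_smul_of_inner_mul_inner_self_le {x y : V} (hx : x ≠ 0)
    (hxy : ⟪x, x⟫ * ⟪y, y⟫ ≤ ⟪x, y⟫ * ⟪x, y⟫) : ∃ r : ℝ, y = r • x := by
  have hnorm : ‖⟪x, y⟫‖ = ‖x‖ * ‖y‖ := by
    rw [← sq_eq_sq₀ (norm_nonneg _) (by positivity), mul_pow, Real.norm_eq_abs, sq_abs,
      ← real_inner_self_eq_norm_sq, ← real_inner_self_eq_norm_sq]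
    linarith [real_inner_mul_inner_self_le x y]
  have hiff := (norm_inner_eq_norm_tfae ℝ x y).out 0 2
  exact (hiff.1 hnorm).resolve_left hx

section
omit [InnerProductSpace ℝ V]

def PosLT (Pos : Set V) (x y : V) : Prop := x ∈ Pos ∧ y - x ∈ Pos

theorem exists_multiset_sum_eq_sub_of_transGen_posLT {x y : V}
    (hxy : Relation.TransGen (PosLT Pos) x y) :
    ∃ s : Multiset V, s ≠ 0 ∧ (∀ p ∈ s, p ∈ Pos) ∧ s.sum = y - x := by
  induction hxy with
  | single hxb => exact ⟨{_ - x}, by simp, by simpa using hxb.2, by simp⟩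
  | @tail b c _ hbc IH =>
    obtain ⟨s, -, hsP, hs⟩ := IH
    refine ⟨(c - b) ::ₘ s, Multiset.cons_ne_zero, ?_, by rw [Multiset.sum_cons, hs]; abel⟩
    simpa [forall_and] using And.intro hbc.2 hsP

def rootSums (Δ I : Set V) : Set V :=
  {γ ∈ Δ | ∃ s : Multiset V, s ≠ 0 ∧ (∀ x ∈ s, x ∈ I) ∧ s.sum = γ}

theorem subset_gen : I ⊆ gen Δ I :=
  fun _ hx => Set.mem_iUnion.2 ⟨0, hx⟩

theorem gen_subset_of_isClosedSubset {M : Set V} (hM : IsClosedSubset Δ M) (hIM : I ⊆ M) :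
    gen Δ I ⊆ M := by
  intro x hx
  obtain ⟨k, hk⟩ := Set.mem_iUnion.1 hx
  clear hx
  induction k generalizing x with
  | zero => exact hIM hk
  | succ k IH =>
    obtain ⟨hxΔ, a, ha, b, hb, rfl⟩ := hk
    exact hM a (hIM ha) b (IH hb) hxΔ

theorem isClosedSubset_rootSums : IsClosedSubset Δ (rootSums Δ I) := by
  rintro - ⟨-, s, hs, hsI, rfl⟩ - ⟨-, t, -, htI, rfl⟩ hsum
  refine ⟨hsum, s + t, by simp [hs], fun x hx => ?_, Multiset.sum_add s t⟩
  rcases Multiset.mem_add.1 hx with hx | hx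
  exacts [hsI x hx, htI x hx]

theorem subset_rootSums (hIΔ : I ⊆ Δ) : I ⊆ rootSums Δ I :=
  fun x hx => ⟨hIΔ hx, {x}, by simp, by simpa using hx, Multiset.sum_singleton x⟩

theorem gen_subset_rootSums (hIΔ : I ⊆ Δ) : gen Δ I ⊆ rootSums Δ I :=
  gen_subset_of_isClosedSubset isClosedSubset_rootSums (subset_rootSums hIΔ)

end

namespace GradedRootSystem

variable (h : GradedRootSystem Δ d Pos)
include h

theorem inner_self_pos {γ : V} (hγ : γ ∈ Δ) : 0 < ⟪γ, γ⟫ :=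
  real_inner_self_pos.2 (h.nonzero γ hγ)

theorem neg_notMem_pos {γ : V} (hγ : γ ∈ Pos) : -γ ∉ Pos :=
  (h.pos_iff γ (h.pos_subset hγ)).1 hγ

theorem neg_mem_pos_of_notMem_pos {γ : V} (hγ : γ ∈ Δ) (hn : γ ∉ Pos) : -γ ∈ Pos :=
  not_not.1 (mt (h.pos_iff γ hγ).2 hn)

theorem grade_nonneg {γ : V} (hγ : γ ∈ Pos) : 0 ≤ d γ := by
  by_contra! hneg
  have hγΔ := h.pos_subset hγ
  refine h.neg_notMem_pos hγ (h.compatible _ (h.neg_mem γ hγΔ) ?_)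
  rw [h.grade_neg γ hγΔ]
  omega

theorem level_one_subset_pos : level Δ d 1 ⊆ Pos :=
  fun γ hγ => h.compatible γ hγ.1 hγ.2.ge

theorem levelGE_one_subset_pos : levelGE Δ d 1 ⊆ Pos :=
  fun γ hγ => h.compatible γ hγ.1 hγ.2

theorem grade_sub {x y : V} (hx : x ∈ Δ) (hy : y ∈ Δ) (hxy : x - y ∈ Δ) :
    d (x - y) = d x - d y := by
  have := h.grade_add _ hxy _ hy (by rwa [sub_add_cancel])
  rw [sub_add_cancel] at this
  omega

theorem sref_mem {α γ : V} (hα : α ∈ Δ) (hγ : γ ∈ Δ) : sref α γ ∈ Δ := by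
  rw [sref_apply]
  exact h.reflect_mem α hα γ hγ

theorem add_mem_of_inner_neg {α β : V} (hα : α ∈ Δ) (hβ : β ∈ Δ) (hin : ⟪α, β⟫ < 0)
    (hne : α + β ≠ 0) : α + β ∈ Δ := by
  have hαα := h.inner_self_pos hα
  have hββ := h.inner_self_pos hβ
  obtain ⟨n, hn⟩ := h.crystallographic α hα β hβ
  obtain ⟨m, hm⟩ := h.crystallographic β hβ α hα
  rw [real_inner_comm] at hn
  have hnA : (n : ℝ) * ⟪α, α⟫ = 2 * ⟪α, β⟫ := by rw [hn]; field_simp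
  have hmB : (m : ℝ) * ⟪β, β⟫ = 2 * ⟪α, β⟫ := by rw [hm]; field_simp
  by_cases hn1 : n = -1
  · have hr := h.reflect_mem α hα β hβ
    rw [real_inner_comm, ← hn, hn1] at hr
    simpa [add_comm] using hr
  by_cases hm1 : m = -1
  · have hr := h.reflect_mem β hβ α hα
    rw [← hm, hm1] at hr
    simpa using hr
  -- Otherwise `n, m ≤ -2`, so `n m ≥ 4` forces equality in Cauchy–Schwarz.
  have hn0 : n < 0 := by exact_mod_cast (show (n : ℝ) < 0 by nlinarith)
  have hm0 : m < 0 := by exact_mod_cast (show (m : ℝ) < 0 by nlinarith)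
  have hnm : (4 : ℝ) ≤ n * m := by
    exact_mod_cast (show (4 : ℤ) ≤ n * m by nlinarith [show n ≤ -2 by omega, show m ≤ -2 by omega])
  obtain ⟨r, hr⟩ := exists_eq_smul_of_inner_mul_inner_self_le (y := β) (h.nonzero α hα)
    (by nlinarith [mul_pos hαα hββ])
  subst hr
  rcases h.reduced α hα r hβ with rfl | rfl
  · rw [one_smul] at hin; linarith
  · exact absurd (by module) hne

theorem sub_mem_of_inner_pos {α β : V} (hα : α ∈ Δ) (hβ : β ∈ Δ) (hin : 0 < ⟪α, β⟫)
    (hne : α ≠ β) : α - β ∈ Δ := by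
  rw [sub_eq_add_neg]
  refine h.add_mem_of_inner_neg hα (h.neg_mem β hβ) (by rw [inner_neg_right]; linarith) ?_
  rwa [← sub_eq_add_neg, sub_ne_zero]

theorem add_mem_pos_of_inner_neg {α β : V} (hα : α ∈ Pos) (hβ : β ∈ Pos) (hin : ⟪α, β⟫ < 0) :
    α + β ∈ Pos := by
  refine h.pos_add α hα β hβ (h.add_mem_of_inner_neg (h.pos_subset hα) (h.pos_subset hβ) hin ?_)
  rintro hzero
  rw [eq_neg_of_add_eq_zero_right hzero] at hβ
  exact h.neg_notMem_pos hα hβ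

theorem multiset_sum_ne_zero {s : Multiset V} (hs : s ≠ 0) (hsP : ∀ x ∈ s, x ∈ Pos) :
    s.sum ≠ 0 := by
  induction hcard : Multiset.card s using Nat.strong_induction_on generalizing s with
  | _ n IH =>
  obtain ⟨a, ha⟩ := Multiset.exists_mem_of_ne_zero hs
  obtain ⟨t, rfl⟩ := Multiset.exists_cons_of_mem ha
  have haP := hsP a (Multiset.mem_cons_self a t)
  intro hsum
  rw [Multiset.sum_cons] at hsum
  rcases eq_or_ne t 0 with rfl | ht
  · exact h.nonzero a (h.pos_subset haP) (by simpa using hsum)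
  -- Some summand `p` of `t.sum = -a` pairs negatively with `a`; merge `a` and `p` into `a + p`.
  have hneg : 0 < ⟪-a, t.sum⟫ := by
    rw [eq_neg_of_add_eq_zero_right hsum]
    exact h.inner_self_pos (h.neg_mem a (h.pos_subset haP))
  obtain ⟨p, hp, hap⟩ := exists_mem_inner_pos_of_inner_multiset_sum_pos hneg
  obtain ⟨u, rfl⟩ := Multiset.exists_cons_of_mem hp
  rw [inner_neg_left, neg_pos] at hap
  refine IH _ (by simp [← hcard]) (s := (a + p) ::ₘ u) (Multiset.cons_ne_zero) ?_ rfl ?_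
  · intro x hx
    rcases Multiset.mem_cons.1 hx with rfl | hx
    · exact h.add_mem_pos_of_inner_neg haP (hsP p (by simp)) hap
    · exact hsP x (by simp [hx])
  · rw [Multiset.sum_cons, add_assoc, ← Multiset.sum_cons, hsum]

theorem exists_cons_eq_multiset_sum_mem {s : Multiset V} (hs : 1 < Multiset.card s)
    (hsP : ∀ x ∈ s, x ∈ Pos) (hΔ : s.sum ∈ Δ) : ∃ β t, s = β ::ₘ t ∧ t.sum ∈ Δ := by
  obtain ⟨β, hβ, hpos⟩ := exists_mem_inner_pos_of_inner_multiset_sum_pos (h.inner_self_pos hΔ)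
  obtain ⟨t, rfl⟩ := Multiset.exists_cons_of_mem hβ
  refine ⟨β, t, rfl, ?_⟩
  have hsub := h.sub_mem_of_inner_pos hΔ (h.pos_subset (hsP β hβ)) hpos ?_
  · simpa using hsub
  intro hsβ
  rw [Multiset.sum_cons, add_eq_left] at hsβ
  refine h.multiset_sum_ne_zero ?_ (fun x hx => hsP x (Multiset.mem_cons_of_mem hx)) hsβ
  rw [Multiset.card_cons] at hs
  exact Multiset.card_pos.1 (by omega)

theorem eq_replicate_of_multiset_sum_eq_nsmul {α : V} (hα : α ∈ simpleRoots Pos) (n : ℕ)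
    {s : Multiset V} (hsP : ∀ x ∈ s, x ∈ Pos) (hsum : s.sum = n • α) :
    s = Multiset.replicate n α := by
  have hαΔ := h.pos_subset hα.1
  induction n generalizing s with
  | zero =>
    by_contra hs
    exact h.multiset_sum_ne_zero hs hsP (by simpa using hsum)
  | succ n IH =>
    have hpos : 0 < ⟪α, s.sum⟫ := by
      rw [hsum, inner_smul_right_eq_smul]
      exact smul_pos n.succ_pos (h.inner_self_pos hαΔ)
    obtain ⟨x, hx, hαx⟩ := exists_mem_inner_pos_of_inner_multiset_sum_pos hpos
    obtain ⟨t, rfl⟩ := Multiset.exists_cons_of_mem hx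
    have hxP := hsP x (Multiset.mem_cons_self x t)
    have htP : ∀ y ∈ t, y ∈ Pos := fun y hy => hsP y (Multiset.mem_cons_of_mem hy)
    rcases eq_or_ne x α with rfl | hxα
    · rw [IH htP (by rw [Multiset.sum_cons, succ_nsmul'] at hsum; exact add_left_cancel hsum),
        Multiset.replicate_succ]
    -- Otherwise `x - α` is a positive root (as `α` is simple) and replacing `x` by it
    -- lowers `n`, which forces `x - α = α`, i.e. `x = 2 α`.
    exfalso
    have hxαΔ : x - α ∈ Δ :=
      h.sub_mem_of_inner_pos (h.pos_subset hxP) hαΔ (by rwa [real_inner_comm]) hxα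
    have hxαP : x - α ∈ Pos := by
      by_contra hn
      have := h.neg_mem_pos_of_notMem_pos hxαΔ hn
      exact hα.2 ⟨x, hxP, -(x - α), this, by abel⟩
    have hrep := IH (s := (x - α) ::ₘ t)
      (by simpa [forall_and] using And.intro hxαP htP)
      (by rw [Multiset.sum_cons] at hsum ⊢
          rw [sub_add_eq_add_sub, hsum, succ_nsmul, add_sub_cancel_right])
    have hx2 : x - α = α := Multiset.eq_of_mem_replicate (hrep ▸ Multiset.mem_cons_self _ t)
    have hx : x = (2 : ℝ) • α := by linear_combination (norm := module) hx2
    rcases h.reduced α hαΔ 2 (hx ▸ h.pos_subset hxP) with h2 | h2 <;> norm_num at h2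

theorem sref_mem_pos {α γ : V} (hα : α ∈ simpleRoots Pos) (hγ : γ ∈ Pos) (hne : γ ≠ α) :
    sref α γ ∈ Pos := by
  have hαΔ := h.pos_subset hα.1
  have hγΔ := h.pos_subset hγ
  obtain ⟨n, hn⟩ := h.crystallographic α hαΔ γ hγΔ
  -- Otherwise `γ + (-sref α γ) = n α` is a sum of positive roots: for `n ≥ 0` this forces
  -- `γ = α`, and for `n < 0` adding `-n` copies of `α` gives a vanishing sum.
  by_contra hneg
  have hδ := h.neg_mem_pos_of_notMem_pos (h.sref_mem hαΔ hγΔ) hneg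
  have hsum : γ + -sref α γ = (n : ℝ) • α := by rw [sref_apply, ← hn]; abel
  obtain ⟨k, rfl | rfl⟩ := Int.eq_nat_or_neg n
  · have := h.eq_replicate_of_multiset_sum_eq_nsmul hα k (s := {γ, -sref α γ})
      (by simpa using And.intro hγ hδ) (by simpa [Nat.cast_smul_eq_nsmul] using hsum)
    exact hne (Multiset.eq_of_mem_replicate (by rw [← this]; simp))
  · refine h.multiset_sum_ne_zero (s := γ ::ₘ -sref α γ ::ₘ Multiset.replicate k α)
      Multiset.cons_ne_zero ?_ ?_
    · simpa [or_imp, forall_and] using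
        ⟨hγ, hδ, fun y hy => (Multiset.eq_of_mem_replicate hy) ▸ hα.1⟩
    · rw [Multiset.sum_cons, Multiset.sum_cons, Multiset.sum_replicate, ← add_assoc, hsum]
      push_cast
      rw [neg_smul, Nat.cast_smul_eq_nsmul, neg_add_cancel]

theorem wellFounded_posLT : WellFounded (PosLT Pos) := by
  let below (y : V) : Set V := {z | Relation.TransGen (PosLT Pos) z y}
  have hfin (y : V) : (below y).Finite := by
    refine h.finite.subset (fun z hz => h.pos_subset ?_)
    obtain ⟨b, hzb, -⟩ := Relation.TransGen.head'_iff.1 hz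
    exact hzb.1
  refine Subrelation.wf (r := InvImage (· < ·) fun y => (below y).ncard) ?_
    (InvImage.wf _ wellFounded_lt)
  intro x y hxy
  refine Set.ncard_lt_ncard ⟨fun z hz => Relation.TransGen.tail hz hxy, fun hsub => ?_⟩ (hfin y)
  obtain ⟨s, hs, hsP, hsum⟩ := exists_multiset_sum_eq_sub_of_transGen_posLT (hsub (.single hxy))
  exact h.multiset_sum_ne_zero hs hsP (by rw [hsum, sub_self])

theorem pos0_subset_closure_simpleRoots :
    pos0 d Pos ⊆ AddSubmonoid.closure (simpleRoots (pos0 d Pos)) := by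
  intro γ hγ
  induction γ using h.wellFounded_posLT.induction with
  | _ v IH =>
  by_cases hs : v ∈ simpleRoots (pos0 d Pos)
  · exact AddSubmonoid.subset_closure hs
  obtain ⟨a, ha, b, hb, rfl⟩ : ∃ a ∈ pos0 d Pos, ∃ b ∈ pos0 d Pos, v = a + b := by
    by_contra hc
    exact hs ⟨hγ, hc⟩
  exact add_mem (IH a ⟨ha.1, by simpa using hb.1⟩ ha) (IH b ⟨hb.1, by simpa using ha.1⟩ hb)

theorem sub_mem_of_isLowerIdeal (hI : IsLowerIdeal Δ d Pos 1 I) {x β : V}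
    (hx : x ∈ I) (hβ : β ∈ pos0 d Pos) (hxβ : x - β ∈ Δ) : x - β ∈ I := by
  obtain ⟨hxΔ, hx1⟩ := hI.1 hx
  refine hI.2 x hx (x - β) ⟨hxβ, ?_⟩ ?_
  · rw [h.grade_sub hxΔ (h.pos_subset hβ.1) hxβ, hx1, hβ.2, sub_zero]
  · rw [leLevel, sub_sub_cancel]
    exact h.pos0_subset_closure_simpleRoots hβ

theorem apply_mem_iff_of_mem_weyl {w : V ≃ₗ[ℝ] V} (hw : w ∈ weyl Δ) (γ : V) :
    w γ ∈ Δ ↔ γ ∈ Δ := by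
  induction hw using Subgroup.closure_induction generalizing γ with
  | mem x hx =>
    obtain ⟨α, hα, rfl⟩ := hx
    exact ⟨fun hγ => sref_sref α γ ▸ h.sref_mem hα hγ, h.sref_mem hα⟩
  | one => rfl
  | mul x y _ _ hx hy => exact (hx (y γ)).trans (hy γ)
  | inv x _ hx => rw [← hx, LinearEquiv.coe_inv, LinearEquiv.apply_symm_apply]

theorem apply_mem_pos_of_notMem_invSet {w : V ≃ₗ[ℝ] V} (hw : w ∈ weyl Δ) {γ : V}
    (hγ : γ ∈ Pos) (hn : γ ∉ invSet Pos w) : w γ ∈ Pos :=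
  (h.pos_iff _ ((h.apply_mem_iff_of_mem_weyl hw γ).2 (h.pos_subset hγ))).2 fun hc => hn ⟨hγ, hc⟩

theorem invSet_one : invSet Pos (1 : V ≃ₗ[ℝ] V) = ∅ :=
  Set.eq_empty_of_forall_notMem fun _ hγ => h.neg_notMem_pos hγ.1 hγ.2

theorem isBiConvex_invSet {w : V ≃ₗ[ℝ] V} (hw : w ∈ weyl Δ) : IsBiConvex Δ Pos (invSet Pos w) := by
  constructor
  · rintro γ₁ ⟨h1P, h1n⟩ γ₂ ⟨h2P, h2n⟩ hsum
    refine ⟨h.pos_add _ h1P _ h2P hsum, ?_⟩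
    rw [map_add, neg_add]
    refine h.pos_add _ h1n _ h2n ?_
    rw [← neg_add, ← map_add]
    exact h.neg_mem _ ((h.apply_mem_iff_of_mem_weyl hw _).2 hsum)
  · rintro γ₁ ⟨h1P, h1n⟩ γ₂ ⟨h2P, h2n⟩ hsum
    have hw12 := h.pos_add _ (h.apply_mem_pos_of_notMem_invSet hw h1P h1n)
      _ (h.apply_mem_pos_of_notMem_invSet hw h2P h2n)
      (by rw [← map_add]; exact (h.apply_mem_iff_of_mem_weyl hw _).2 hsum)
    refine ⟨h.pos_add _ h1P _ h2P hsum, fun hmem => h.neg_notMem_pos hw12 ?_⟩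
    simpa using hmem.2

theorem invSet_subset_levelGE_of_mem_W0 {w : V ≃ₗ[ℝ] V} (hw : w ∈ W0 Δ d Pos) :
    invSet Pos w ⊆ levelGE Δ d 1 := by
  rintro γ ⟨hP, hneg⟩
  refine ⟨h.pos_subset hP, ?_⟩
  rcases (h.grade_nonneg hP).lt_or_eq with hd | hd
  · omega
  · exact absurd hneg (h.neg_notMem_pos (hw.2 γ ⟨hP, hd.symm⟩))

theorem exists_mem_simpleRoots_of_isClosedSubset_diff {M : Set V} (hMP : M ⊆ Pos)
    (hc : IsClosedSubset Δ (Pos \ M)) (hne : M.Nonempty) : ∃ α ∈ M, α ∈ simpleRoots Pos := by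
  obtain ⟨α, hαM, hmin⟩ := h.wellFounded_posLT.has_min M hne
  refine ⟨α, hαM, hMP hαM, ?_⟩
  rintro ⟨a, ha, b, hb, rfl⟩
  by_cases haM : a ∈ M
  · exact hmin a haM ⟨ha, by simpa using hb⟩
  by_cases hbM : b ∈ M
  · exact hmin b hbM ⟨hb, by simpa using ha⟩
  exact (hc a ⟨ha, haM⟩ b ⟨hb, hbM⟩ (h.pos_subset (hMP hαM))).2 hαM

theorem mem_invSet_mul_sref_iff {w : V ≃ₗ[ℝ] V} {α γ : V} (hα : α ∈ simpleRoots Pos)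
    (hγ : γ ∈ Pos) (hne : γ ≠ α) : γ ∈ invSet Pos (w * sref α) ↔ sref α γ ∈ invSet Pos w :=
  ⟨fun hm => ⟨h.sref_mem_pos hα hγ hne, hm.2⟩, fun hm => ⟨hγ, hm.2⟩⟩

theorem mem_sref_preimage_diff_iff {M : Set V} {α γ : V} (hα : α ∈ Pos) (hγ : γ ∈ Pos) :
    γ ∈ sref α ⁻¹' (M \ {α}) ↔ sref α γ ∈ M := by
  refine ⟨fun hm => hm.1, fun hm => ⟨hm, fun heq => h.neg_notMem_pos hα ?_⟩⟩
  have hγα : γ = -α := by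
    rw [← sref_sref α γ, Set.mem_singleton_iff.1 heq, sref_self (h.nonzero α (h.pos_subset hα))]
  exact hγα ▸ hγ

theorem sref_preimage_diff_subset_pos {M : Set V} {α : V} (hα : α ∈ simpleRoots Pos)
    (hMP : M ⊆ Pos) : sref α ⁻¹' (M \ {α}) ⊆ Pos :=
  fun y ⟨hyM, hyα⟩ => sref_sref α y ▸ h.sref_mem_pos hα (hMP hyM) hyα

theorem isBiConvex_sref_preimage_diff {M : Set V} {α : V} (hα : α ∈ simpleRoots Pos)
    (hαM : α ∈ M) (hMP : M ⊆ Pos) (hM : IsBiConvex Δ Pos M) :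
    IsBiConvex Δ Pos (sref α ⁻¹' (M \ {α})) := by
  have hαΔ := h.pos_subset hα.1
  constructor
  · rintro x ⟨hxM, -⟩ y ⟨hyM, -⟩ hxy
    have hsum := h.sref_mem hαΔ hxy
    rw [map_add] at hsum
    refine ⟨by rw [map_add]; exact hM.1 _ hxM _ hyM hsum, ?_⟩
    rw [Set.mem_singleton_iff, map_add]
    exact fun heq => hα.2 ⟨_, hMP hxM, _, hMP hyM, heq.symm⟩
  rintro x ⟨hxP, hxn⟩ y ⟨hyP, hyn⟩ hxy
  refine ⟨h.pos_add _ hxP _ hyP hxy, fun hm => ?_⟩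
  have hsM : sref α x + sref α y ∈ M := map_add (sref α) x y ▸ hm.1
  have hnotM {z : V} (hz : z ∈ Pos) (hzn : z ∉ sref α ⁻¹' (M \ {α})) : sref α z ∉ M :=
    fun hc => hzn ((h.mem_sref_preimage_diff_iff hα.1 hz).2 hc)
  -- As `sref α α = -α`, adding `α ∈ M` to `sref α α + sref α z ∈ M` gives `sref α z ∈ M`.
  have hα_add {z : V} (hz : z ∈ Pos) (hzn : z ∉ sref α ⁻¹' (M \ {α}))
      (hsum : sref α α + sref α z ∈ M) : False := by
    rw [sref_self (h.nonzero α hαΔ)] at hsum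
    have hmem := hM.1 _ hsum α hαM
      (by rw [neg_add_cancel_comm]; exact h.sref_mem hαΔ (h.pos_subset hz))
    exact hnotM hz hzn (by rwa [neg_add_cancel_comm] at hmem)
  rcases eq_or_ne x α with rfl | hxα
  · exact hα_add hyP hyn hsM
  rcases eq_or_ne y α with rfl | hyα
  · exact hα_add hxP hxn (add_comm (sref y x) _ ▸ hsM)
  refine (hM.2 _ ⟨h.sref_mem_pos hα hxP hxα, hnotM hxP hxn⟩ _
    ⟨h.sref_mem_pos hα hyP hyα, hnotM hyP hyn⟩ ?_).2 hsM
  rw [← map_add]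
  exact h.sref_mem hαΔ hxy

theorem invSet_mul_sref_eq {M : Set V} {w : V ≃ₗ[ℝ] V} {α : V} (hα : α ∈ simpleRoots Pos)
    (hαM : α ∈ M) (hMP : M ⊆ Pos) (hw : w ∈ weyl Δ)
    (hwM : invSet Pos w = sref α ⁻¹' (M \ {α})) : invSet Pos (w * sref α) = M := by
  have hα0 := h.nonzero α (h.pos_subset hα.1)
  ext γ
  by_cases hγ : γ ∈ Pos
  swap
  · exact iff_of_false (fun hc => hγ hc.1) (fun hc => hγ (hMP hc))
  rcases eq_or_ne γ α with rfl | hne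
  · refine iff_of_true ⟨hγ, ?_⟩ hαM
    change -(w (sref γ γ)) ∈ Pos
    rw [sref_self hα0, map_neg, neg_neg]
    refine h.apply_mem_pos_of_notMem_invSet hw hγ fun hc => ?_
    rw [hwM, Set.mem_preimage, sref_self hα0] at hc
    exact h.neg_notMem_pos hγ (hMP hc.1)
  · rw [h.mem_invSet_mul_sref_iff hα hγ hne, hwM,
      h.mem_sref_preimage_diff_iff hα.1 (h.sref_mem_pos hα hγ hne), sref_sref]

theorem exists_invSet_eq_of_isBiConvex {M : Set V} (hMP : M ⊆ Pos) (hM : IsBiConvex Δ Pos M) :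
    ∃ w ∈ weyl Δ, invSet Pos w = M := by
  induction hn : M.ncard using Nat.strong_induction_on generalizing M with
  | _ n IH =>
  rcases M.eq_empty_or_nonempty with rfl | hne
  · exact ⟨1, one_mem _, h.invSet_one⟩
  obtain ⟨α, hαM, hα⟩ := h.exists_mem_simpleRoots_of_isClosedSubset_diff hMP hM.2 hne
  have hcard : (sref α ⁻¹' (M \ {α})).ncard < n := by
    rw [Set.ncard_preimage_of_injective_subset_range (sref α).injective
      (by simp [(sref α).surjective.range_eq]), ← hn]
    exact Set.ncard_sdiff_singleton_lt_of_mem hαM (h.finite.subset (hMP.trans h.pos_subset))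
  obtain ⟨w, hw, hwM⟩ := IH _ hcard (h.sref_preimage_diff_subset_pos hα hMP)
    (h.isBiConvex_sref_preimage_diff hα hαM hMP hM) rfl
  exact ⟨w * sref α, mul_mem hw (Subgroup.subset_closure ⟨α, h.pos_subset hα.1, rfl⟩),
    h.invSet_mul_sref_eq hα hαM hMP hw hwM⟩

theorem rootSums_subset_gen (hIP : I ⊆ Pos) : rootSums Δ I ⊆ gen Δ I := by
  rintro - ⟨hΔ, s, hs, hsI, rfl⟩
  induction hcard : Multiset.card s using Nat.strong_induction_on generalizing s with
  | _ n IH =>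
  by_cases hn : 1 < Multiset.card s
  swap
  · obtain ⟨a, rfl⟩ := Multiset.card_eq_one.1
      (show Multiset.card s = 1 by have := Multiset.card_pos.2 hs; omega)
    simpa using subset_gen (hsI a (by simp))
  obtain ⟨β, t, rfl, htΔ⟩ :=
    h.exists_cons_eq_multiset_sum_mem hn (fun x hx => hIP (hsI x hx)) hΔ
  have ht : t ≠ 0 := by rintro rfl; simp at hn
  obtain ⟨k, hk⟩ := Set.mem_iUnion.1 <| IH _ (by simp [← hcard]) t ht
    (fun x hx => hsI x (Multiset.mem_cons_of_mem hx)) htΔ rfl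
  exact Set.mem_iUnion.2 ⟨k + 1, hΔ, β, hsI β (by simp), t.sum, hk, Multiset.sum_cons β t⟩

theorem gen_eq_rootSums (hIP : I ⊆ Pos) : gen Δ I = rootSums Δ I :=
  (gen_subset_rootSums (hIP.trans h.pos_subset)).antisymm (h.rootSums_subset_gen hIP)

theorem grade_of_mem_idealPow (hI1 : I ⊆ level Δ d 1) (k : ℕ) {x : V}
    (hx : x ∈ idealPow Δ I (k + 1)) : x ∈ Δ ∧ d x = k + 1 := by
  induction k generalizing x with
  | zero => exact ⟨(hI1 hx).1, by simpa using (hI1 hx).2⟩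
  | succ k IH =>
    obtain ⟨hxΔ, a, ha, b, hb, rfl⟩ := hx
    obtain ⟨hbΔ, hdb⟩ := IH hb
    refine ⟨hxΔ, ?_⟩
    rw [h.grade_add a (hI1 ha).1 b hbΔ hxΔ, (hI1 ha).2, hdb]
    push_cast
    ring

theorem gen_subset_levelGE (hI1 : I ⊆ level Δ d 1) : gen Δ I ⊆ levelGE Δ d 1 := by
  intro x hx
  obtain ⟨k, hk⟩ := Set.mem_iUnion.1 hx
  obtain ⟨hxΔ, hdx⟩ := h.grade_of_mem_idealPow hI1 k hk
  exact ⟨hxΔ, by omega⟩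

theorem gen_inter_level_one (hI1 : I ⊆ level Δ d 1) :
    gen Δ I ∩ level Δ d 1 = I := by
  refine (Set.subset_inter subset_gen hI1).antisymm' fun x hx => ?_
  obtain ⟨⟨k, hk⟩, -, hx1⟩ := And.imp_left Set.mem_iUnion.1 hx
  obtain ⟨-, hdx⟩ := h.grade_of_mem_idealPow hI1 k hk
  obtain rfl : k = 0 := by omega
  exact hk

theorem mem_or_mem_rootSums_of_sub_mem_pos (hI : IsLowerIdeal Δ d Pos 1 I)
    {x δ₁ δ₂ : V} {t : Multiset V} (hxI : x ∈ I) (htI : ∀ y ∈ t, y ∈ I) (h₁ : δ₁ ∈ Pos)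
    (h₂ : δ₂ ∈ Pos) (hsum : δ₁ + δ₂ = x + t.sum) (hε : x - δ₁ ∈ Pos) :
    δ₁ ∈ I ∨ δ₂ ∈ rootSums Δ I := by
  obtain ⟨hxΔ, hx1⟩ := hI.1 hxI
  have hd := h.grade_sub hxΔ (h.pos_subset h₁) (h.pos_subset hε)
  rcases (h.grade_nonneg hε).lt_or_eq with hdε | hdε
  · right
    have hδ₁ : δ₁ ∈ pos0 d Pos := ⟨h₁, by linarith [h.grade_nonneg h₁]⟩
    refine ⟨h.pos_subset h₂, (x - δ₁) ::ₘ t, Multiset.cons_ne_zero, ?_, ?_⟩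
    · simpa [forall_and] using
        And.intro (h.sub_mem_of_isLowerIdeal hI hxI hδ₁ (h.pos_subset hε)) htI
    · rw [Multiset.sum_cons, sub_add_eq_add_sub, ← hsum, add_sub_cancel_left]
  · left
    have := h.sub_mem_of_isLowerIdeal hI hxI ⟨hε, hdε.symm⟩
      (by rw [sub_sub_cancel]; exact h.pos_subset h₁)
    rwa [sub_sub_cancel] at this

theorem mem_rootSums_or_mem_rootSums (hI : IsLowerIdeal Δ d Pos 1 I)
    {s : Multiset V} (hs : s ≠ 0) (hsI : ∀ x ∈ s, x ∈ I) {γ₁ γ₂ : V} (h₁ : γ₁ ∈ Pos)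
    (h₂ : γ₂ ∈ Pos) (hsum : γ₁ + γ₂ = s.sum) : γ₁ ∈ rootSums Δ I ∨ γ₂ ∈ rootSums Δ I := by
  have hIP : I ⊆ Pos := hI.1.trans h.level_one_subset_pos
  have hIR := subset_rootSums (hIP.trans h.pos_subset)
  induction s using Multiset.strongInductionOn generalizing γ₁ γ₂ with
  | ih s IH =>
  -- Peel off a summand `x` of `s` pairing positively with `γ₁` (or, symmetrically, `γ₂`).
  have key {δ₁ δ₂ : V} (h₁ : δ₁ ∈ Pos) (h₂ : δ₂ ∈ Pos) (hsum : δ₁ + δ₂ = s.sum)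
      (hpos : 0 < ⟪δ₁, s.sum⟫) : δ₁ ∈ rootSums Δ I ∨ δ₂ ∈ rootSums Δ I := by
    obtain ⟨x, hx, hδx⟩ := exists_mem_inner_pos_of_inner_multiset_sum_pos hpos
    obtain ⟨t, rfl⟩ := Multiset.exists_cons_of_mem hx
    have hxI := hsI x (Multiset.mem_cons_self x t)
    have htI : ∀ y ∈ t, y ∈ I := fun y hy => hsI y (Multiset.mem_cons_of_mem hy)
    rcases eq_or_ne δ₁ x with rfl | hne
    · exact Or.inl (hIR hxI)
    have hsub := h.sub_mem_of_inner_pos (h.pos_subset h₁) (h.pos_subset (hIP hxI)) hδx hne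
    rw [Multiset.sum_cons] at hsum
    by_cases hP : δ₁ - x ∈ Pos
    · have ht : t ≠ 0 := by
        rintro rfl
        rw [Multiset.sum_zero, add_zero] at hsum
        refine h.neg_notMem_pos hP (by convert h₂ using 1; rw [← hsum]; abel)
      have hsum' : δ₁ - x + δ₂ = t.sum := by rw [sub_add_eq_add_sub, hsum]; abel
      refine (IH t (Multiset.lt_cons_self t x) ht htI hP h₂ hsum').imp_left fun hR => ?_
      simpa using isClosedSubset_rootSums x (hIR hxI) _ hR (by simpa using h.pos_subset h₁)
    · have hε := h.neg_mem_pos_of_notMem_pos hsub hP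
      rw [neg_sub] at hε
      exact (h.mem_or_mem_rootSums_of_sub_mem_pos hI hxI htI h₁ h₂ hsum hε).imp_left
        fun hδ => hIR hδ
  have hS : 0 < ⟪γ₁, s.sum⟫ + ⟪γ₂, s.sum⟫ := by
    rw [← inner_add_left, hsum]
    exact real_inner_self_pos.2 (h.multiset_sum_ne_zero hs fun x hx => hIP (hsI x hx))
  by_cases hpos : 0 < ⟪γ₁, s.sum⟫
  · exact key h₁ h₂ hsum hpos
  · exact (key h₂ h₁ (by rw [add_comm, hsum]) (by linarith)).symm

theorem isClosedSubset_pos_diff_gen (hI : IsLowerIdeal Δ d Pos 1 I) :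
    IsClosedSubset Δ (Pos \ gen Δ I) := by
  have hIP : I ⊆ Pos := hI.1.trans h.level_one_subset_pos
  rw [h.gen_eq_rootSums hIP]
  rintro γ₁ ⟨h1P, h1n⟩ γ₂ ⟨h2P, h2n⟩ hsum
  refine ⟨h.pos_add _ h1P _ h2P hsum, ?_⟩
  rintro ⟨-, s, hs, hsI, hss⟩
  rcases h.mem_rootSums_or_mem_rootSums hI hs hsI h1P h2P hss.symm with hR | hR
  exacts [h1n hR, h2n hR]

theorem exists_mem_W0_invSet_inter_level_eq (hI : IsLowerIdeal Δ d Pos 1 I) :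
    ∃ w ∈ W0 Δ d Pos, invSet Pos w ∩ level Δ d 1 = I := by
  have hIP : I ⊆ Pos := hI.1.trans h.level_one_subset_pos
  obtain ⟨w, hw, hwI⟩ := h.exists_invSet_eq_of_isBiConvex
    ((h.gen_subset_levelGE hI.1).trans h.levelGE_one_subset_pos)
    ⟨h.gen_eq_rootSums hIP ▸ isClosedSubset_rootSums, h.isClosedSubset_pos_diff_gen hI⟩
  refine ⟨w, ⟨hw, fun γ hγ => h.apply_mem_pos_of_notMem_invSet hw hγ.1 fun hc => ?_⟩,
    by rw [hwI, h.gen_inter_level_one hI.1]⟩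
  have := (h.gen_subset_levelGE hI.1 (hwI ▸ hc)).2
  rw [hγ.2] at this
  omega

theorem invSet_inter_level_eq_iff (hI1 : I ⊆ level Δ d 1) {wmin wmax w : V ≃ₗ[ℝ] V}
    (hmin : invSet Pos wmin = gen Δ I)
    (hmax : invSet Pos wmax = levelGE Δ d 1 \ gen Δ (level Δ d 1 \ I)) (hw : w ∈ W0 Δ d Pos) :
    invSet Pos w ∩ level Δ d 1 = I ↔
      invSet Pos wmin ⊆ invSet Pos w ∧ invSet Pos w ⊆ invSet Pos wmax := by
  obtain ⟨hcl, hcl'⟩ := h.isBiConvex_invSet hw.1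
  rw [hmin, hmax]
  constructor
  · intro hfib
    have hI : I ⊆ invSet Pos w := fun γ hγ => (hfib.symm ▸ hγ : γ ∈ invSet Pos w ∩ _).1
    have hIc : level Δ d 1 \ I ⊆ Pos \ invSet Pos w := fun γ hγ =>
      ⟨h.level_one_subset_pos hγ.1, fun hγw => hγ.2 (hfib ▸ ⟨hγw, hγ.1⟩)⟩
    exact ⟨gen_subset_of_isClosedSubset hcl hI, fun γ hγ =>
      ⟨h.invSet_subset_levelGE_of_mem_W0 hw hγ,
        fun hc => (gen_subset_of_isClosedSubset hcl' hIc hc).2 hγ⟩⟩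
  · rintro ⟨hminw, hwmax⟩
    refine Set.Subset.antisymm (fun γ hγ => ?_) fun γ hγ => ⟨hminw (subset_gen hγ), hI1 hγ⟩
    by_contra hγI
    exact (hwmax hγ.1).2 (subset_gen ⟨hγ.2, hγI⟩)

end GradedRootSystem

end

/-- The map `τ : W⁰ → J₋(Δ(1))`, `w ↦ N(w) ∩ Δ(1)`, is surjective, and each fiber
`τ⁻¹(I)` is the interval `[w_{I,min}, w_{I,max}]` in the weak Bruhat order. -/
theorem stmt9 (Δ : Set V) (d : V → ℤ) (Pos : Set V)
    (h : GradedRootSystem Δ d Pos) :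
    (∀ I : Set V, IsLowerIdeal Δ d Pos 1 I →
      ∃ w ∈ W0 Δ d Pos, invSet Pos w ∩ level Δ d 1 = I) ∧
    (∀ I : Set V, IsLowerIdeal Δ d Pos 1 I →
      ∀ wmin ∈ W0 Δ d Pos, ∀ wmax ∈ W0 Δ d Pos,
        invSet Pos wmin = gen Δ I →
        invSet Pos wmax = levelGE Δ d 1 \ gen Δ (level Δ d 1 \ I) →
        ∀ w ∈ W0 Δ d Pos,
          (invSet Pos w ∩ level Δ d 1 = I ↔
            invSet Pos wmin ⊆ invSet Pos w ∧ invSet Pos w ⊆ invSet Pos wmax)) := by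
  refine ⟨fun I hI => h.exists_mem_W0_invSet_inter_level_eq hI, ?_⟩
  intro I hI wmin _ wmax _ hmin hmax w hw
  exact h.invSet_inter_level_eq_iff hI.1 hmin hmax hw
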